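/- arXiv:1501.07826 — 2 statements merged into one kernel-verified Lean document; each statement's English description precedes it below -/
import Mathlib

section
/- The increasing sequence of points of [0,∞) at which L_{ξ,1} admits a local maximum is exactly q_0 = 0 together with the points q_n = (1/2)(log Q_n − log Δ_{n−1}) for 1 ≤ n < s, and for each integer n with 1 ≤ n < s the function L_{ξ,1} coincides with L_{x_{n−1}} on the interval [q_{n−1}, q_n]. -/
open Pointwise

/-- Distance from a real number to the nearest integer. -/
noncomputable def nearestInt (ξ : ℝ) : ℝ := sInf (Set.range fun m : ℤ => |ξ - (m : ℝ)|)

/-- The convex body `C_ξ(e^q) = {(x,y) : |x| ≤ e^q, |xξ - y| ≤ e^{-q}}`. -/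
def body (ξ q : ℝ) : Set (ℝ × ℝ) :=
  {p : ℝ × ℝ | |p.1| ≤ Real.exp q ∧ |p.1 * ξ - p.2| ≤ Real.exp (-q)}

/-- The `j`-th successive minimum of `C_ξ(e^q)` with respect to the lattice `ℤ²`:
the smallest `λ ≥ 0` such that `λ • C_ξ(e^q)` contains at least `j` linearly
independent points of `ℤ²`. -/
noncomputable def lam (ξ q : ℝ) (j : ℕ) : ℝ :=
  sInf {l : ℝ | 0 ≤ l ∧ ∃ v : Fin j → ℤ × ℤ,
    LinearIndependent ℝ (fun i => ((((v i).1 : ℝ)), (((v i).2 : ℝ)))) ∧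
    ∀ i, ((((v i).1 : ℝ)), (((v i).2 : ℝ))) ∈ l • body ξ q}

/-- `L_{ξ,j}(q) = log λ_j(C_ξ(e^q))`. -/
noncomputable def LL (ξ : ℝ) (j : ℕ) (q : ℝ) : ℝ := Real.log (lam ξ q j)

/-- `L_x(q)`: the logarithm of the smallest `λ ≥ 0` with `x ∈ λ • C_ξ(e^q)`, namely
`log (max (|Q| e^{-q}) (|Qξ - P| e^q))`, which equals
`max (log |Q| - q) (log |Qξ - P| + q)` (the first term being omitted when `Q = 0`,
the second when `Qξ - P = 0`). -/
noncomputable def Lx (ξ : ℝ) (x : ℤ × ℤ) (q : ℝ) : ℝ :=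
  Real.log (max (|(x.1 : ℝ)| * Real.exp (-q)) (|(x.1 : ℝ) * ξ - (x.2 : ℝ)| * Real.exp q))

/-- Data of a real number `ξ ∈ [0,1/2]` together with its simple continued fraction
expansion `ξ = [0; a 1, a 2, …]`, with partial quotients `a n ≥ 1` for `1 ≤ n < s`,
where `s ∈ ℕ* ∪ {∞}` (encoded in `WithTop ℤ`), `a (s-1) ≥ 2` if `2 ≤ s < ∞`
(`s = 1` meaning `ξ = 0`), and with `Q`, `P` the denominators and numerators of its
convergents, given by the standard recurrences with initial values
`P (-1) = Q 0 = 1`, `P 0 = Q (-1) = 0`.  The fact that `[0; a 1, a 2, …]` is indeed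
the continued fraction expansion of `ξ` is recorded through the value conditions
`hfin` (if `s < ∞` then `ξ = P (s-1) / Q (s-1)`) and `hinf` (if `s = ∞` then
`P n / Q n → ξ`), which, given the constraints on the `a n`, characterize it. -/
structure CFData where
  ξ : ℝ
  s : WithTop ℤ
  a : ℤ → ℤ
  Q : ℤ → ℤ
  P : ℤ → ℤ
  hξ0 : 0 ≤ ξ
  hξhalf : ξ ≤ 1 / 2
  hs : 1 ≤ s
  ha : ∀ n : ℤ, 1 ≤ n → (n : WithTop ℤ) < s → 1 ≤ a n
  halast : ∀ n : ℤ, 2 ≤ n → (n : WithTop ℤ) = s → 2 ≤ a (n - 1)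
  hQ0 : Q 0 = 1
  hQneg : Q (-1) = 0
  hP0 : P 0 = 0
  hPneg : P (-1) = 1
  hQrec : ∀ n : ℤ, 1 ≤ n → (n : WithTop ℤ) < s → Q n = Q (n - 2) + a n * Q (n - 1)
  hPrec : ∀ n : ℤ, 1 ≤ n → (n : WithTop ℤ) < s → P n = P (n - 2) + a n * P (n - 1)
  hfin : ∀ k : ℤ, (k : WithTop ℤ) = s → ξ = (P (k - 1) : ℝ) / (Q (k - 1) : ℝ)
  hinf : s = ⊤ → Filter.Tendsto (fun n : ℕ => (P (n : ℤ) : ℝ) / (Q (n : ℤ) : ℝ))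
      Filter.atTop (nhds ξ)

namespace CFData

/-- `Δ n = |Q n • ξ - P n|`. -/
noncomputable def Δ (c : CFData) (n : ℤ) : ℝ := |(c.Q n : ℝ) * c.ξ - (c.P n : ℝ)|

/-- `Q (n,t) = Q (n-2) + t * Q (n-1)`. -/
def Qt (c : CFData) (n t : ℤ) : ℤ := c.Q (n - 2) + t * c.Q (n - 1)

/-- `P (n,t) = P (n-2) + t * P (n-1)`. -/
def Pt (c : CFData) (n t : ℤ) : ℤ := c.P (n - 2) + t * c.P (n - 1)

/-- `Δ (n,t) = |Q (n,t) • ξ - P (n,t)|`. -/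
noncomputable def Δt (c : CFData) (n t : ℤ) : ℝ := |(c.Qt n t : ℝ) * c.ξ - (c.Pt n t : ℝ)|

/-- `q n = (log (Q n) - log (Δ (n-1))) / 2`; in particular `q 0 = 0`. -/
noncomputable def qcrit (c : CFData) (n : ℤ) : ℝ :=
  (Real.log (c.Q n : ℝ) - Real.log (c.Δ (n - 1))) / 2

end CFData

/-!
By Lagrange's best approximation property, for `q ∈ [q_n, q_{n+1}]` the convergent
`x_n = (Q_n, P_n)` minimizes `max (|Q| e^{-q}, |Qξ - P| e^q)` over the nonzero points of `ℤ²`,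
so there `L_{ξ,1} = L_{x_n} = max (log Q_n - q, log Δ_n + q)`: a V with slopes `-1` and `+1`
whose vertex `qmin n` lies strictly inside the interval, because `Δ_n < Δ_{n-1}` and
`Q_n < Q_{n+1}` (the latter at `n = 0` is where `ξ ≤ 1/2` enters). Consecutive V's therefore meet
in peaks exactly at the `q_n`, and `L_{ξ,1}` has no other local maxima; beyond `q_{s-1}` it is
`log Q_{s-1} - q`. All of this rests on the sign alternation `(-1)ⁿ (Q_n ξ - P_n) ≥ 0`,
obtained by downward induction from `Δ_{s-1} = 0` when `s < ∞`, and from the monotone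
convergence of the even and of the odd convergents when `s = ∞`.
-/

open Real Filter Set Topology

section LocalExtr

variable {f : ℝ → ℝ} {a b x : ℝ}

lemma isLocalMaxOn_Ici_of_antitoneOn (hab : a < b) (hf : AntitoneOn f (Ico a b)) :
    IsLocalMaxOn f (Ici a) a :=
  Filter.mem_of_superset (Ico_mem_nhdsGE hab) fun _ hy => hf (left_mem_Ico.2 hab) hy hy.1

lemma not_isLocalMax_of_strictAntiOn (hax : a < x) (hf : StrictAntiOn f (Icc a x)) :
    ¬ IsLocalMax f x := fun hmax => by
  obtain ⟨y, hyx, hy⟩ :=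
    ((hmax.filter_mono nhdsWithin_le_nhds).and (Ioo_mem_nhdsLT hax)).exists
  exact hyx.not_gt (hf ⟨hy.1.le, hy.2.le⟩ ⟨hax.le, le_rfl⟩ hy.2)

lemma not_isLocalMax_of_strictMonoOn (hxb : x < b) (hf : StrictMonoOn f (Icc x b)) :
    ¬ IsLocalMax f x := fun hmax => by
  obtain ⟨y, hyx, hy⟩ :=
    ((hmax.filter_mono nhdsWithin_le_nhds).and (Ioo_mem_nhdsGT hxb)).exists
  exact hyx.not_gt (hf ⟨le_rfl, hxb.le⟩ ⟨hy.1.le, hy.2.le⟩ hy.1)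

end LocalExtr

section FirstMinimum

/-- The least `λ ≥ 0` with `x ∈ λ • body ξ q` (`castPair_mem_smul_body_iff`); `Lx` is its
logarithm. -/
noncomputable def lamPoint (ξ : ℝ) (x : ℤ × ℤ) (q : ℝ) : ℝ :=
  max (|(x.1 : ℝ)| * exp (-q)) (|(x.1 : ℝ) * ξ - x.2| * exp q)

variable {ξ q l : ℝ} {x : ℤ × ℤ}

lemma castPair_ne_zero (hx : x ≠ 0) : ((x.1 : ℝ), (x.2 : ℝ)) ≠ 0 := by
  contrapose! hx
  simp_all [Prod.ext_iff]

lemma lamPoint_pos (hx : x ≠ 0) : 0 < lamPoint ξ x q := by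
  rcases eq_or_ne x.1 0 with h1 | h1
  · have h2 : x.2 ≠ 0 := fun h2 => hx (Prod.ext h1 h2)
    exact lt_max_of_lt_right (by simp [h1, h2, exp_pos])
  · exact lt_max_of_lt_left (by simp [h1, exp_pos])

lemma abs_mul_exp_neg_le_iff {l y : ℝ} (hl : 0 < l) (q : ℝ) :
    |l⁻¹ * y| ≤ exp q ↔ |y| * exp (-q) ≤ l := by
  rw [abs_mul, abs_inv, abs_of_pos hl, inv_mul_le_iff₀ hl, exp_neg, ← div_eq_mul_inv,
    div_le_iff₀ (exp_pos q)]

lemma castPair_mem_smul_body_iff (hl : 0 ≤ l) (hx : x ≠ 0) :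
    ((x.1 : ℝ), (x.2 : ℝ)) ∈ l • body ξ q ↔ lamPoint ξ x q ≤ l := by
  rcases hl.eq_or_lt with rfl | hl
  · rw [zero_smul_set ⟨0, by simp [body, (exp_pos _).le]⟩]
    exact iff_of_false (castPair_ne_zero hx) (lamPoint_pos hx).not_ge
  · rw [mem_smul_set_iff_inv_smul_mem₀ hl.ne', lamPoint, max_le_iff]
    simp only [body, mem_ofPred_eq, Prod.smul_fst, Prod.smul_snd, smul_eq_mul]
    rw [show l⁻¹ * x.1 * ξ - l⁻¹ * x.2 = l⁻¹ * (x.1 * ξ - x.2) by ring,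
      abs_mul_exp_neg_le_iff hl, ← neg_neg q, abs_mul_exp_neg_le_iff hl, neg_neg]

lemma lam_one_eq_lamPoint {x₀ : ℤ × ℤ} (hx₀ : x₀ ≠ 0)
    (hmin : ∀ x ≠ 0, lamPoint ξ x₀ q ≤ lamPoint ξ x q) :
    lam ξ q 1 = lamPoint ξ x₀ q := by
  refine IsLeast.csInf_eq ⟨⟨(lamPoint_pos hx₀).le, fun _ => x₀, ?_, fun _ => ?_⟩, ?_⟩
  · exact linearIndependent_unique_iff.2 (castPair_ne_zero hx₀)
  · exact (castPair_mem_smul_body_iff (lamPoint_pos hx₀).le hx₀).2 le_rfl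
  · rintro l ⟨hl, v, hv, hmem⟩
    have hv0 : v 0 ≠ 0 := fun h => hv.ne_zero 0 (by simp [h])
    exact (hmin _ hv0).trans ((castPair_mem_smul_body_iff hl hv0).1 (hmem 0))

end FirstMinimum

lemma negOnePow_mul_self_real (n : ℤ) :
    ((n.negOnePow : ℤ) : ℝ) * (n.negOnePow : ℤ) = 1 := by
  rw [← Int.cast_mul, ← Units.val_mul, Int.units_mul_self, Units.val_one, Int.cast_one]

lemma mul_exp_le_mul_exp_iff {A B s t : ℝ} (hA : 0 < A) (hB : 0 < B) :
    A * exp s ≤ B * exp t ↔ log A + s ≤ log B + t := by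
  rw [← log_le_log_iff (by positivity) (by positivity), log_mul hA.ne' (exp_pos _).ne',
    log_mul hB.ne' (exp_pos _).ne', log_exp, log_exp]

namespace CFData

lemma s_eq_top_or_eq_coe (c : CFData) : c.s = ⊤ ∨ ∃ K : ℤ, c.s = K := by
  rcases eq_or_ne c.s ⊤ with h | h
  · exact .inl h
  · obtain ⟨K, hK⟩ := WithTop.ne_top_iff_exists.1 h
    exact .inr ⟨K, hK.symm⟩

section Indices

variable {c : CFData}

lemma coe_lt_s_of_le {m n : ℤ} (hmn : m ≤ n) (hn : (n : WithTop ℤ) < c.s) :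
    (m : WithTop ℤ) < c.s :=
  (WithTop.coe_le_coe.2 hmn).trans_lt hn

lemma add_one_lt_s_or_eq {n : ℤ} (hn : (n : WithTop ℤ) < c.s) :
    ((n + 1 : ℤ) : WithTop ℤ) < c.s ∨ ((n + 1 : ℤ) : WithTop ℤ) = c.s := by
  rcases c.s_eq_top_or_eq_coe with h | ⟨K, h⟩
  · exact .inl (h ▸ WithTop.coe_lt_top _)
  · rw [h, WithTop.coe_lt_coe] at hn ⊢
    rw [WithTop.coe_eq_coe]
    omega

end Indices

variable (c : CFData)

lemma zero_lt_s : ((0 : ℤ) : WithTop ℤ) < c.s :=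
  (WithTop.coe_lt_coe.2 zero_lt_one).trans_le c.hs

lemma Q_pos {n : ℤ} (hn : 0 ≤ n) (hns : (n : WithTop ℤ) < c.s) : 0 < c.Q n := by
  suffices ∀ n : ℤ, 0 ≤ n → (n : WithTop ℤ) < c.s → 0 ≤ c.Q (n - 1) ∧ 0 < c.Q n from
    (this n hn hns).2
  intro n hn
  induction n, hn using Int.leInduction with
  | base => simp [c.hQ0, c.hQneg]
  | succ n hn ih =>
    intro hns
    obtain ⟨h₁, h₂⟩ := ih (coe_lt_s_of_le (by omega) hns)
    have hrec := c.hQrec (n + 1) (by omega) hns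
    have ha := c.ha (n + 1) (by omega) hns
    rw [show n + 1 - 2 = n - 1 by ring, add_sub_cancel_right] at hrec
    rw [add_sub_cancel_right]
    exact ⟨h₂.le, by nlinarith⟩

lemma Q_sub_one_nonneg {n : ℤ} (hn : 0 ≤ n) (hns : (n : WithTop ℤ) < c.s) :
    0 ≤ c.Q (n - 1) := by
  rcases hn.eq_or_lt with rfl | hn
  · simp [c.hQneg]
  · exact (c.Q_pos (by omega) (coe_lt_s_of_le (by omega) hns)).le

lemma Q_mul_P_sub_P_mul_Q {n : ℤ} (hn : 0 ≤ n) (hns : (n : WithTop ℤ) < c.s) :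
    c.Q n * c.P (n - 1) - c.P n * c.Q (n - 1) = n.negOnePow := by
  induction n, hn using Int.leInduction with
  | base => simp [c.hQ0, c.hQneg, c.hP0, c.hPneg]
  | succ n hn ih =>
    have hQ := c.hQrec (n + 1) (by omega) hns
    have hP := c.hPrec (n + 1) (by omega) hns
    rw [show n + 1 - 2 = n - 1 by ring, add_sub_cancel_right] at hQ hP
    rw [add_sub_cancel_right, hQ, hP, Int.negOnePow_succ, Units.val_neg,
      ← ih (coe_lt_s_of_le (by omega) hns)]
    ring

lemma P_mul_Q_sub_Q_mul_P_add_two {n : ℤ} (hn : 0 ≤ n)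
    (hns : ((n + 2 : ℤ) : WithTop ℤ) < c.s) :
    c.P (n + 2) * c.Q n - c.Q (n + 2) * c.P n = c.a (n + 2) * n.negOnePow := by
  have hQ := c.hQrec (n + 2) (by omega) hns
  have hP := c.hPrec (n + 2) (by omega) hns
  have hdet := c.Q_mul_P_sub_P_mul_Q (n := n + 1) (by omega) (coe_lt_s_of_le (by omega) hns)
  rw [add_sub_cancel_right, Int.negOnePow_succ, Units.val_neg] at hdet
  rw [show n + 2 - 2 = n by ring, show n + 2 - 1 = n + 1 by ring] at hQ hP
  rw [hQ, hP]
  linear_combination (-c.a (n + 2)) * hdet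

def δ (n : ℤ) : ℝ := c.Q n * c.ξ - c.P n

/-- Shown below to equal `Δ n`: the errors `δ n` alternate in sign. -/
def σ (n : ℤ) : ℝ := n.negOnePow * c.δ n

lemma σ_neg_one : c.σ (-1) = 1 := by
  simp [σ, δ, c.hQneg, c.hPneg]

lemma σ_sub_two {n : ℤ} (hn : 1 ≤ n) (hns : (n : WithTop ℤ) < c.s) :
    c.σ (n - 2) = c.a n * c.σ (n - 1) + c.σ n := by
  simp only [σ, δ, c.hQrec n hn hns, c.hPrec n hn hns, Int.negOnePow_sub, Int.negOnePow_one,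
    Int.negOnePow_even 2 even_two]
  push_cast
  ring

lemma σ_sub_one_mul_Q_add {n : ℤ} (hn : 0 ≤ n) (hns : (n : WithTop ℤ) < c.s) :
    c.σ (n - 1) * c.Q n + c.σ n * c.Q (n - 1) = 1 := by
  have hdet : (c.Q n * c.P (n - 1) - c.P n * c.Q (n - 1) : ℝ) = (n.negOnePow : ℤ) := by
    exact_mod_cast c.Q_mul_P_sub_P_mul_Q hn hns
  simp only [σ, δ, Int.negOnePow_sub, Int.negOnePow_one, Units.val_mul, Units.val_neg,
    Units.val_one]
  push_cast
  linear_combination ((n.negOnePow : ℤ) : ℝ) * hdet + negOnePow_mul_self_real n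

lemma σ_eq_zero {n : ℤ} (hn : ((n + 1 : ℤ) : WithTop ℤ) = c.s) : c.σ n = 0 := by
  have h1 : (1 : ℤ) ≤ n + 1 := by exact_mod_cast hn ▸ c.hs
  have hQ : (0 : ℝ) < c.Q n := by
    exact_mod_cast c.Q_pos (n := n) (by omega) (hn ▸ WithTop.coe_lt_coe.2 (lt_add_one n))
  have hξ := c.hfin (n + 1) hn
  rw [add_sub_cancel_right] at hξ
  simp [σ, δ, hξ, mul_div_cancel₀ _ hQ.ne']

/-- For `s = ∞`, the sequence `(-1)ᵏ P (k + 2j) / Q (k + 2j)` increases strictly to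
`(-1)ᵏ ξ`. -/
lemma σ_pos_of_s_eq_top (hs : c.s = ⊤) (k : ℕ) : 0 < c.σ k := by
  have hlt : ∀ n : ℤ, (n : WithTop ℤ) < c.s := fun n => hs ▸ WithTop.coe_lt_top n
  set e : ℝ := (((k : ℤ).negOnePow : ℤ) : ℝ) with he
  have hQ : ∀ n : ℕ, (0 : ℝ) < c.Q n := fun n => by
    exact_mod_cast c.Q_pos n.cast_nonneg (hlt n)
  set f : ℕ → ℝ := fun j => e * (c.P (k + 2 * j : ℕ) / c.Q (k + 2 * j : ℕ)) with hf
  have hmono : StrictMono f := strictMono_nat_of_lt_succ fun j => by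
    obtain ⟨m, hm⟩ : ∃ m : ℕ, m = k + 2 * j := ⟨_, rfl⟩
    have hem : ((m : ℤ).negOnePow : ℤ) = e := by
      simp [he, hm, Int.negOnePow_add, Int.negOnePow_two_mul]
    have hstep : (c.P (m + 2) * c.Q m - c.Q (m + 2) * c.P m : ℝ) = c.a (m + 2) * e := by
      rw [← hem]; exact_mod_cast c.P_mul_Q_sub_Q_mul_P_add_two m.cast_nonneg (hlt _)
    have ha : (0 : ℝ) < c.a (m + 2) := by exact_mod_cast c.ha (m + 2) (by omega) (hlt _)
    have hQm := hQ m
    have hQm2 := hQ (m + 2)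
    simp only [hf, ← hm, show k + 2 * (j + 1) = m + 2 by omega]
    push_cast at hQm2 ⊢
    rw [← sub_pos, show e * (c.P (m + 2) / c.Q (m + 2)) - e * (c.P m / c.Q m)
      = c.a (m + 2) / (c.Q m * c.Q (m + 2)) by
        field_simp
        linear_combination e * hstep + c.a (m + 2) * negOnePow_mul_self_real k]
    positivity
  have hlim : Tendsto f atTop (𝓝 (e * c.ξ)) :=
    ((c.hinf hs).comp (strictMono_nat_of_lt_succ fun j => by omega :
      StrictMono fun j : ℕ => k + 2 * j).tendsto_atTop).const_mul e
  have hf0 : f 0 < e * c.ξ := (hmono zero_lt_one).trans_le (hmono.monotone.ge_of_tendsto hlim 1)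
  have : c.σ k = c.Q k * (e * c.ξ - f 0) := by
    have := (hQ k).ne'
    simp only [σ, δ, hf, ← he, mul_zero, add_zero]
    field_simp
  rw [this]
  exact mul_pos (hQ k) (sub_pos.2 hf0)

/-- For `s = K`, downward induction from `σ (K - 1) = 0` and `σ (K - 2) * Q (K - 1) = 1`. -/
lemma σ_pos_of_s_eq_coe {K : ℤ} (hs : c.s = K) {n : ℤ} (hn : -1 ≤ n) (hnK : n + 2 ≤ K) :
    0 < c.σ n := by
  have hlt : ∀ m : ℤ, m < K → (m : WithTop ℤ) < c.s := fun m hm =>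
    hs ▸ WithTop.coe_lt_coe.2 hm
  have hlast : c.σ (K - 1) = 0 := c.σ_eq_zero (by rw [sub_add_cancel, hs])
  suffices ∀ m ≤ K - 2, -1 ≤ m → 0 < c.σ m ∧ 0 ≤ c.σ (m + 1) from
    (this n (by omega) hn).1
  intro m hm
  induction m, hm using Int.leInductionDown with
  | base =>
    intro hK
    have hstar := c.σ_sub_one_mul_Q_add (n := K - 1) (by omega) (hlt _ (by omega))
    have hQ : (0 : ℝ) < c.Q (K - 1) := by exact_mod_cast c.Q_pos (by omega) (hlt _ (by omega))
    rw [hlast, zero_mul, add_zero, show K - 1 - 1 = K - 2 by ring] at hstar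
    rw [show K - 2 + 1 = K - 1 by ring, hlast]
    exact ⟨by nlinarith, le_rfl⟩
  | pred m hm ih =>
    intro hm₁
    obtain ⟨h₁, h₂⟩ := ih (by omega)
    have hrec := c.σ_sub_two (n := m + 1) (by omega) (hlt _ (by omega))
    have ha : (1 : ℝ) ≤ c.a (m + 1) := by
      exact_mod_cast c.ha (m + 1) (by omega) (hlt _ (by omega))
    rw [show m + 1 - 2 = m - 1 by ring, add_sub_cancel_right] at hrec
    rw [sub_add_cancel, hrec]
    exact ⟨by nlinarith, h₁.le⟩

lemma σ_pos {n : ℤ} (hn : -1 ≤ n) (hns : ((n + 1 : ℤ) : WithTop ℤ) < c.s) :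
    0 < c.σ n := by
  rcases hn.eq_or_lt with rfl | hn
  · simp [σ_neg_one]
  rcases c.s_eq_top_or_eq_coe with hs | ⟨K, hs⟩
  · lift n to ℕ using (by omega)
    exact c.σ_pos_of_s_eq_top hs n
  · rw [hs, WithTop.coe_lt_coe] at hns
    exact c.σ_pos_of_s_eq_coe hs hn.le (by omega)

lemma Δ_eq_σ {n : ℤ} (hn : -1 ≤ n) (hns : (n : WithTop ℤ) < c.s) : c.Δ n = c.σ n := by
  have hσ : 0 ≤ c.σ n := by
    rcases add_one_lt_s_or_eq hns with h | h
    · exact (c.σ_pos hn h).le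
    · exact (c.σ_eq_zero h).ge
  rw [← abs_of_nonneg hσ, σ, abs_mul, ← Int.cast_abs, Int.abs_negOnePow, Int.cast_one,
    one_mul]
  rfl

lemma δ_eq_negOnePow_mul_Δ {n : ℤ} (hn : -1 ≤ n) (hns : (n : WithTop ℤ) < c.s) :
    c.δ n = (n.negOnePow : ℤ) * c.Δ n := by
  rw [c.Δ_eq_σ hn hns, σ, ← mul_assoc, negOnePow_mul_self_real, one_mul]

lemma Δ_pos {n : ℤ} (hn : -1 ≤ n) (hns : ((n + 1 : ℤ) : WithTop ℤ) < c.s) :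
    0 < c.Δ n := by
  rw [c.Δ_eq_σ hn (coe_lt_s_of_le (by omega) hns)]
  exact c.σ_pos hn hns

lemma Δ_eq_zero {n : ℤ} (hns : ((n + 1 : ℤ) : WithTop ℤ) = c.s) : c.Δ n = 0 := by
  have h1 : (1 : ℤ) ≤ n + 1 := by exact_mod_cast hns ▸ c.hs
  rw [c.Δ_eq_σ (by omega) (hns ▸ WithTop.coe_lt_coe.2 (lt_add_one n)), c.σ_eq_zero hns]

lemma Δ_neg_one : c.Δ (-1) = 1 := by
  simp [Δ, c.hQneg, c.hPneg]

lemma Δ_zero : c.Δ 0 = c.ξ := by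
  simp [Δ, c.hQ0, c.hP0, abs_of_nonneg c.hξ0]

lemma Δ_sub_two {n : ℤ} (hn : 1 ≤ n) (hns : (n : WithTop ℤ) < c.s) :
    c.Δ (n - 2) = c.a n * c.Δ (n - 1) + c.Δ n := by
  rw [c.Δ_eq_σ (by omega) (coe_lt_s_of_le (by omega) hns),
    c.Δ_eq_σ (by omega) (coe_lt_s_of_le (by omega) hns), c.Δ_eq_σ (by omega) hns,
    c.σ_sub_two hn hns]

lemma Δ_lt_Δ_sub_one {n : ℤ} (hn : 0 ≤ n) (hns : (n : WithTop ℤ) < c.s) :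
    c.Δ n < c.Δ (n - 1) := by
  rcases add_one_lt_s_or_eq hns with h₁ | h₁
  · have hrec := c.Δ_sub_two (n := n + 1) (by omega) h₁
    rw [show n + 1 - 2 = n - 1 by ring, add_sub_cancel_right] at hrec
    have hΔ := c.Δ_pos (by omega) h₁
    have ha : (1 : ℝ) ≤ c.a (n + 1) := by exact_mod_cast c.ha (n + 1) (by omega) h₁
    rw [hrec]
    rcases add_one_lt_s_or_eq h₁ with h₂ | h₂
    · nlinarith [c.Δ_pos (by omega) h₂]
    · have ha₂ : (2 : ℝ) ≤ c.a (n + 1) := by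
        exact_mod_cast add_sub_cancel_right (n + 1) 1 ▸ c.halast (n + 1 + 1) (by omega) h₂
      have : 0 ≤ c.Δ (n + 1) := abs_nonneg _
      nlinarith
  · rw [c.Δ_eq_zero h₁]
    exact c.Δ_pos (by omega) (by rwa [sub_add_cancel])

lemma two_le_a_one (h : ((1 : ℤ) : WithTop ℤ) < c.s) : 2 ≤ c.a 1 := by
  have hrec := c.Δ_sub_two le_rfl h
  have hlt := c.Δ_lt_Δ_sub_one zero_le_one h
  norm_num [c.Δ_neg_one, c.Δ_zero] at hrec hlt
  have ha := c.ha 1 le_rfl h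
  by_contra! ha₂
  have ha₁ : (c.a 1 : ℝ) = 1 := by exact_mod_cast (by omega : c.a 1 = 1)
  rw [ha₁] at hrec
  linarith [c.hξhalf]

lemma Q_sub_one_lt {n : ℤ} (hn : 1 ≤ n) (hns : (n : WithTop ℤ) < c.s) :
    c.Q (n - 1) < c.Q n := by
  have hrec := c.hQrec n hn hns
  have hQ := c.Q_pos (n := n - 1) (by omega) (coe_lt_s_of_le (by omega) hns)
  rcases hn.eq_or_lt with rfl | hn
  · have := c.two_le_a_one hns
    simp only [Int.reduceSub, c.hQneg, c.hQ0] at hrec ⊢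
    omega
  · have := c.Q_pos (n := n - 2) (by omega) (coe_lt_s_of_le (by omega) hns)
    have := c.ha n (by omega) hns
    nlinarith

lemma exists_eq_mul_add_mul {k : ℤ} (hk : 0 ≤ k) (hks : (k : WithTop ℤ) < c.s) (x y : ℤ) :
    ∃ u v : ℤ, x = u * c.Q (k - 1) + v * c.Q k ∧ y = u * c.P (k - 1) + v * c.P k := by
  have hdet := c.Q_mul_P_sub_P_mul_Q hk hks
  have hε : (k.negOnePow : ℤ) * k.negOnePow = 1 := by
    rw [← Units.val_mul, Int.units_mul_self, Units.val_one]
  refine ⟨-k.negOnePow * (x * c.P k - y * c.Q k),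
    -k.negOnePow * (y * c.Q (k - 1) - x * c.P (k - 1)), ?_, ?_⟩
  · linear_combination (-k.negOnePow * x) * hdet - x * hε
  · linear_combination (-k.negOnePow * y) * hdet - y * hε

/-- Lagrange's best approximation property. Writing `(x, y) = u x_{k-1} + v x_k`, the bound
`|x| < Q k` forces `u ≠ 0` and `u v ≤ 0`, so by the alternation of signs the two terms of
`x ξ - y = u δ (k - 1) + v δ k` do not cancel. -/
lemma Δ_sub_one_le_abs {k : ℤ} (hk : 0 ≤ k) (hks : (k : WithTop ℤ) < c.s) {x y : ℤ}
    (hxy : (x, y) ≠ 0) (hx : |x| < c.Q k) : c.Δ (k - 1) ≤ |x * c.ξ - y| := by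
  obtain ⟨u, v, hxe, hye⟩ := c.exists_eq_mul_add_mul hk hks x y
  have hQ₁ := c.Q_sub_one_nonneg hk hks
  have hx' := abs_lt.1 hx
  have hΔ₁ : 0 ≤ c.Δ (k - 1) := abs_nonneg _
  have hΔ : 0 ≤ c.Δ k := abs_nonneg _
  have hδ₁ := c.δ_eq_negOnePow_mul_Δ (n := k - 1) (by omega) (coe_lt_s_of_le (by omega) hks)
  have hδ := c.δ_eq_negOnePow_mul_Δ (by omega) hks
  rw [Int.negOnePow_sub, Int.negOnePow_one] at hδ₁
  have hval : (x * c.ξ - y : ℝ) = (k.negOnePow : ℤ) * (v * c.Δ k - u * c.Δ (k - 1)) := by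
    have : (x * c.ξ - y : ℝ) = u * c.δ (k - 1) + v * c.δ k := by
      simp only [δ, hxe, hye]
      push_cast
      ring
    rw [this, hδ₁, hδ]
    push_cast
    ring
  subst hxe hye
  rw [hval, abs_mul, ← Int.cast_abs, Int.abs_negOnePow, Int.cast_one, one_mul]
  rcases lt_trichotomy u 0 with hu | rfl | hu
  · have hv : 0 ≤ v := by nlinarith
    have hu' : (u : ℝ) ≤ -1 := by exact_mod_cast (by omega : u ≤ -1)
    have hv' : (0 : ℝ) ≤ v := by exact_mod_cast hv
    exact le_abs.2 (.inl (by nlinarith))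
  · have hv : v = 0 := by nlinarith
    simp_all
  · have hv : v ≤ 0 := by nlinarith
    have hu' : (1 : ℝ) ≤ u := by exact_mod_cast hu
    have hv' : (v : ℝ) ≤ 0 := by exact_mod_cast hv
    exact le_abs.2 (.inr (by nlinarith))

lemma lamPoint_convergent {n : ℤ} (hn : 0 ≤ n) (hns : (n : WithTop ℤ) < c.s) (q : ℝ) :
    lamPoint c.ξ (c.Q n, c.P n) q = max (c.Q n * exp (-q)) (c.Δ n * exp q) := by
  have hQ : (0 : ℝ) < c.Q n := by exact_mod_cast c.Q_pos hn hns
  simp [lamPoint, Δ, abs_of_pos hQ]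

lemma lamPoint_convergent_le {n : ℤ} (hn : 0 ≤ n) (hns : (n : WithTop ℤ) < c.s) {q : ℝ}
    (hq₁ : c.qcrit n ≤ q)
    (hq₂ : ((n + 1 : ℤ) : WithTop ℤ) < c.s → q ≤ c.qcrit (n + 1))
    {x : ℤ × ℤ} (hx : x ≠ 0) : lamPoint c.ξ (c.Q n, c.P n) q ≤ lamPoint c.ξ x q := by
  have hQ : (0 : ℝ) < c.Q n := by exact_mod_cast c.Q_pos hn hns
  have hΔ₁ := c.Δ_pos (n := n - 1) (by omega) (by rwa [sub_add_cancel])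
  have hΔlt := c.Δ_lt_Δ_sub_one hn hns
  rw [c.lamPoint_convergent hn hns]
  rcases lt_or_ge |x.1| (c.Q n) with h | h
  · have hbest := c.Δ_sub_one_le_abs hn hns hx h
    have hcross : c.Q n * exp (-q) ≤ c.Δ (n - 1) * exp q :=
      (mul_exp_le_mul_exp_iff hQ hΔ₁).2 (by rw [qcrit] at hq₁; linarith)
    refine le_max_of_le_right (max_le (hcross.trans ?_) ?_) <;> gcongr
    exact hΔlt.le.trans hbest
  · have h' : (c.Q n : ℝ) ≤ |(x.1 : ℝ)| := by exact_mod_cast h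
    refine max_le (le_max_of_le_left (by gcongr)) ?_
    rcases add_one_lt_s_or_eq hns with hs | hs
    · rcases lt_or_ge |x.1| (c.Q (n + 1)) with h₁ | h₁
      · have hbest := c.Δ_sub_one_le_abs (by omega) hs hx h₁
        rw [add_sub_cancel_right] at hbest
        exact le_max_of_le_right (by gcongr)
      · have h₁' : (c.Q (n + 1) : ℝ) ≤ |(x.1 : ℝ)| := by exact_mod_cast h₁
        have hcross : c.Δ n * exp q ≤ c.Q (n + 1) * exp (-q) :=
          (mul_exp_le_mul_exp_iff (c.Δ_pos (by omega) hs)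
            (by exact_mod_cast c.Q_pos (by omega) hs)).2
            (by have := hq₂ hs; rw [qcrit, add_sub_cancel_right] at this; linarith)
        exact le_max_of_le_left (hcross.trans (by gcongr))
    · rw [c.Δ_eq_zero hs, zero_mul]
      exact (lamPoint_pos hx).le

lemma LL_eq_Lx_convergent {n : ℤ} (hn : 0 ≤ n) (hns : (n : WithTop ℤ) < c.s) {q : ℝ}
    (hq₁ : c.qcrit n ≤ q)
    (hq₂ : ((n + 1 : ℤ) : WithTop ℤ) < c.s → q ≤ c.qcrit (n + 1)) :
    LL c.ξ 1 q = Lx c.ξ (c.Q n, c.P n) q := by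
  have hx : (c.Q n, c.P n) ≠ 0 := fun h => (c.Q_pos hn hns).ne' (congrArg Prod.fst h)
  rw [LL, lam_one_eq_lamPoint hx fun x hx' => c.lamPoint_convergent_le hn hns hq₁ hq₂ hx']
  rfl

/-- The vertex of `L_{x_n}(q) = max (log Q_n - q) (log Δ_n + q)`, where `L_{ξ,1}` attains its
minimum on `[qcrit n, qcrit (n + 1)]`. -/
noncomputable def qmin (n : ℤ) : ℝ := (log (c.Q n) - log (c.Δ n)) / 2

lemma qcrit_zero : c.qcrit 0 = 0 := by
  simp [qcrit, c.hQ0, c.Δ_neg_one]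

lemma qcrit_lt_qmin {n : ℤ} (hn : 0 ≤ n) (hns : ((n + 1 : ℤ) : WithTop ℤ) < c.s) :
    c.qcrit n < c.qmin n := by
  have := log_lt_log (c.Δ_pos (by omega) hns)
    (c.Δ_lt_Δ_sub_one hn (coe_lt_s_of_le (by omega) hns))
  rw [qcrit, qmin]
  linarith

lemma qmin_lt_qcrit_add_one {n : ℤ} (hn : 0 ≤ n) (hns : ((n + 1 : ℤ) : WithTop ℤ) < c.s) :
    c.qmin n < c.qcrit (n + 1) := by
  have hlt := c.Q_sub_one_lt (by omega) hns
  rw [add_sub_cancel_right] at hlt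
  have := log_lt_log (by exact_mod_cast c.Q_pos hn (coe_lt_s_of_le (by omega) hns))
    (by exact_mod_cast hlt : (c.Q n : ℝ) < c.Q (n + 1))
  rw [qcrit, qmin, add_sub_cancel_right]
  linarith

lemma LL_eq_log_Q_sub {n : ℤ} (hn : 0 ≤ n) (hns : (n : WithTop ℤ) < c.s) {q : ℝ}
    (hq₁ : c.qcrit n ≤ q) (hq₂ : ((n + 1 : ℤ) : WithTop ℤ) < c.s → q ≤ c.qmin n) :
    LL c.ξ 1 q = log (c.Q n) - q := by
  have hQ : (0 : ℝ) < c.Q n := by exact_mod_cast c.Q_pos hn hns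
  have hle : c.Δ n * exp q ≤ c.Q n * exp (-q) := by
    rcases add_one_lt_s_or_eq hns with hs | hs
    · exact (mul_exp_le_mul_exp_iff (c.Δ_pos (by omega) hs) hQ).2
        (by have := hq₂ hs; rw [qmin] at this; linarith)
    · rw [c.Δ_eq_zero hs, zero_mul]
      positivity
  rw [c.LL_eq_Lx_convergent hn hns hq₁
      fun hs => (hq₂ hs).trans (c.qmin_lt_qcrit_add_one hn hs).le,
    Lx, ← lamPoint, c.lamPoint_convergent hn hns, max_eq_left hle, log_mul hQ.ne' (exp_pos _).ne',
    log_exp, sub_eq_add_neg]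

lemma LL_eq_log_Δ_add {n : ℤ} (hn : 0 ≤ n) (hns : ((n + 1 : ℤ) : WithTop ℤ) < c.s)
    {q : ℝ} (hq₁ : c.qmin n ≤ q) (hq₂ : q ≤ c.qcrit (n + 1)) :
    LL c.ξ 1 q = log (c.Δ n) + q := by
  have hQ : (0 : ℝ) < c.Q n := by exact_mod_cast c.Q_pos hn (coe_lt_s_of_le (by omega) hns)
  have hΔ := c.Δ_pos (by omega) hns
  have hle : c.Q n * exp (-q) ≤ c.Δ n * exp q :=
    (mul_exp_le_mul_exp_iff hQ hΔ).2 (by rw [qmin] at hq₁; linarith)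
  rw [c.LL_eq_Lx_convergent hn (coe_lt_s_of_le (by omega) hns)
      ((c.qcrit_lt_qmin hn hns).le.trans hq₁) fun _ => hq₂,
    Lx, ← lamPoint, c.lamPoint_convergent hn (coe_lt_s_of_le (by omega) hns), max_eq_right hle,
    log_mul hΔ.ne' (exp_pos _).ne', log_exp]

lemma strictAntiOn_LL {n : ℤ} (hn : 0 ≤ n) (hns : (n : WithTop ℤ) < c.s) {b : ℝ}
    (hb : ((n + 1 : ℤ) : WithTop ℤ) < c.s → b ≤ c.qmin n) :
    StrictAntiOn (LL c.ξ 1) (Icc (c.qcrit n) b) := fun x hx y hy hxy => by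
  rw [c.LL_eq_log_Q_sub hn hns hx.1 fun hs => hx.2.trans (hb hs),
    c.LL_eq_log_Q_sub hn hns hy.1 fun hs => hy.2.trans (hb hs)]
  linarith

lemma strictMonoOn_LL {n : ℤ} (hn : 0 ≤ n) (hns : ((n + 1 : ℤ) : WithTop ℤ) < c.s) :
    StrictMonoOn (LL c.ξ 1) (Icc (c.qmin n) (c.qcrit (n + 1))) := fun x hx y hy hxy => by
  rw [c.LL_eq_log_Δ_add hn hns hx.1 hx.2, c.LL_eq_log_Δ_add hn hns hy.1 hy.2]
  linarith

lemma qcrit_lt_qcrit {m n : ℤ} (hm : 0 ≤ m) (hmn : m < n) (hns : (n : WithTop ℤ) < c.s) :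
    c.qcrit m < c.qcrit n := by
  induction n, (show m + 1 ≤ n by omega) using Int.leInduction with
  | base => exact (c.qcrit_lt_qmin hm hns).trans (c.qmin_lt_qcrit_add_one hm hns)
  | succ n hn ih =>
    exact (ih (by omega) (coe_lt_s_of_le (by omega) hns)).trans
      ((c.qcrit_lt_qmin (by omega) hns).trans (c.qmin_lt_qcrit_add_one (by omega) hns))

lemma qcrit_nonneg {n : ℤ} (hn : 0 ≤ n) (hns : (n : WithTop ℤ) < c.s) : 0 ≤ c.qcrit n := by
  rcases hn.eq_or_lt with rfl | hn
  · exact c.qcrit_zero.ge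
  · exact c.qcrit_zero ▸ (c.qcrit_lt_qcrit le_rfl hn hns).le

lemma le_Q {n : ℤ} (hn : 0 ≤ n) (hns : (n : WithTop ℤ) < c.s) : n + 1 ≤ c.Q n := by
  induction n, hn using Int.leInduction with
  | base => simp [c.hQ0]
  | succ n hn ih =>
    have := c.Q_sub_one_lt (n := n + 1) (by omega) hns
    rw [add_sub_cancel_right] at this
    linarith [ih (coe_lt_s_of_le (by omega) hns)]

lemma Δ_le_one {n : ℤ} (hn : -1 ≤ n) (hns : (n : WithTop ℤ) < c.s) : c.Δ n ≤ 1 := by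
  induction n, hn using Int.leInduction with
  | base => exact c.Δ_neg_one.le
  | succ n hn ih =>
    have := c.Δ_lt_Δ_sub_one (n := n + 1) (by omega) hns
    rw [add_sub_cancel_right] at this
    linarith [ih (coe_lt_s_of_le (by omega) hns)]

lemma exists_lt_qcrit (hs : c.s = ⊤) (B : ℝ) : ∃ n : ℤ, 0 ≤ n ∧ B < c.qcrit n := by
  have hlt : ∀ n : ℤ, (n : WithTop ℤ) < c.s := fun n => hs ▸ WithTop.coe_lt_top n
  obtain ⟨N, hN⟩ := exists_nat_gt (exp (2 * B))
  refine ⟨N, N.cast_nonneg, ?_⟩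
  have hN' : (N : ℝ) + 1 ≤ c.Q N := by exact_mod_cast c.le_Q N.cast_nonneg (hlt N)
  have hQ : exp (2 * B) < c.Q N := by linarith
  have hlogQ := (lt_log_iff_exp_lt ((exp_pos _).trans hQ)).2 hQ
  have hlogΔ : log (c.Δ (N - 1)) ≤ 0 :=
    log_nonpos (abs_nonneg _) (c.Δ_le_one (n := N - 1) (by omega) (hlt _))
  rw [qcrit]
  linarith

lemma isLocalMaxOn_qcrit {n : ℤ} (hn : 0 ≤ n) (hns : (n : WithTop ℤ) < c.s) :
    IsLocalMaxOn (LL c.ξ 1) (Ici 0) (c.qcrit n) := by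
  obtain ⟨b, hb, hanti⟩ :
      ∃ b, c.qcrit n < b ∧ AntitoneOn (LL c.ξ 1) (Ico (c.qcrit n) b) := by
    rcases add_one_lt_s_or_eq hns with hs | hs
    · exact ⟨_, c.qcrit_lt_qmin hn hs,
        (c.strictAntiOn_LL hn hns fun _ => le_rfl).antitoneOn.mono Ico_subset_Icc_self⟩
    · exact ⟨_, lt_add_one _,
        (c.strictAntiOn_LL hn hns fun h => absurd hs h.ne).antitoneOn.mono Ico_subset_Icc_self⟩
  rcases hn.eq_or_lt with rfl | hn
  · rw [c.qcrit_zero] at hb hanti ⊢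
    exact isLocalMaxOn_Ici_of_antitoneOn hb hanti
  · have hmono := c.strictMonoOn_LL (n := n - 1) (by omega) (by rwa [sub_add_cancel])
    have hlt := c.qmin_lt_qcrit_add_one (n := n - 1) (by omega) (by rwa [sub_add_cancel])
    rw [sub_add_cancel] at hmono hlt
    exact (isLocalMax_of_mono_anti hlt hb (hmono.monotoneOn.mono Ioc_subset_Icc_self) hanti).on _

lemma not_isLocalMax_LL_of_qcrit_lt {n : ℤ} (hn : 0 ≤ n) (hns : (n : WithTop ℤ) < c.s)
    {x : ℝ} (hx₁ : c.qcrit n < x)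
    (hx₂ : ((n + 1 : ℤ) : WithTop ℤ) < c.s → x < c.qcrit (n + 1)) :
    ¬ IsLocalMax (LL c.ξ 1) x := by
  by_cases h : ((n + 1 : ℤ) : WithTop ℤ) < c.s ∧ c.qmin n < x
  · exact not_isLocalMax_of_strictMonoOn (hx₂ h.1)
      ((c.strictMonoOn_LL hn h.1).mono (Icc_subset_Icc_left h.2.le))
  · exact not_isLocalMax_of_strictAntiOn hx₁
      (c.strictAntiOn_LL hn hns fun hs => not_lt.1 fun hx => h ⟨hs, hx⟩)

lemma exists_eq_qcrit_of_isLocalMaxOn {x : ℝ} (hx : 0 ≤ x)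
    (hmax : IsLocalMaxOn (LL c.ξ 1) (Ici 0) x) :
    ∃ n : ℤ, 0 ≤ n ∧ (n : WithTop ℤ) < c.s ∧ x = c.qcrit n := by
  by_contra! hne
  have hmax' : 0 < x → IsLocalMax (LL c.ξ 1) x := fun h => hmax.isLocalMax (Ici_mem_nhds h)
  have key : ∀ n : ℤ, 0 ≤ n → (n : WithTop ℤ) < c.s → c.qcrit n < x := by
    intro n hn
    induction n, hn using Int.leInduction with
    | base => exact fun h => lt_of_le_of_ne (c.qcrit_zero ▸ hx) (hne 0 le_rfl h).symm
    | succ n hn ih =>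
      intro hns
      have hns' := coe_lt_s_of_le (m := n) (by omega) hns
      have h := ih hns'
      refine lt_of_le_of_ne (not_lt.1 fun hlt => ?_) (hne _ (by omega) hns).symm
      exact c.not_isLocalMax_LL_of_qcrit_lt hn hns' h (fun _ => hlt)
        (hmax' ((c.qcrit_nonneg hn hns').trans_lt h))
  have hx₀ : 0 < x := c.qcrit_zero ▸ key 0 le_rfl c.zero_lt_s
  rcases c.s_eq_top_or_eq_coe with hs | ⟨K, hs⟩
  · obtain ⟨n, hn, hxn⟩ := c.exists_lt_qcrit hs x
    exact (key n hn (hs ▸ WithTop.coe_lt_top n)).not_gt hxn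
  · have hK : (1 : ℤ) ≤ K := by exact_mod_cast hs ▸ c.hs
    have hKs : ((K - 1 : ℤ) : WithTop ℤ) < c.s := hs ▸ WithTop.coe_lt_coe.2 (by omega)
    exact c.not_isLocalMax_LL_of_qcrit_lt (by omega) hKs (key _ (by omega) hKs)
      (fun h => absurd h (by rw [sub_add_cancel, hs]; exact lt_irrefl _)) (hmax' hx₀)

end CFData

theorem stmt14 (c : CFData) :
    ({x : ℝ | 0 ≤ x ∧ IsLocalMaxOn (LL c.ξ 1) (Set.Ici 0) x} =
      {x : ℝ | ∃ n : ℤ, 0 ≤ n ∧ (n : WithTop ℤ) < c.s ∧ x = c.qcrit n}) ∧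
    c.qcrit 0 = 0 ∧
    (∀ m n : ℤ, 0 ≤ m → m < n → (n : WithTop ℤ) < c.s → c.qcrit m < c.qcrit n) ∧
    (∀ n : ℤ, 1 ≤ n → (n : WithTop ℤ) < c.s →
      ∀ q ∈ Set.Icc (c.qcrit (n - 1)) (c.qcrit n),
        LL c.ξ 1 q = Lx c.ξ (c.Q (n - 1), c.P (n - 1)) q) := by
  refine ⟨Set.ext fun x =>
      ⟨fun ⟨hx, hmax⟩ => c.exists_eq_qcrit_of_isLocalMaxOn hx hmax, ?_⟩,
    c.qcrit_zero, fun m n hm hmn hns => c.qcrit_lt_qcrit hm hmn hns, fun n hn hns q hq => ?_⟩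
  · rintro ⟨n, hn, hns, rfl⟩
    exact ⟨c.qcrit_nonneg hn hns, c.isLocalMaxOn_qcrit hn hns⟩
  · exact c.LL_eq_Lx_convergent (by omega) (CFData.coe_lt_s_of_le (by omega) hns) hq.1
      fun _ => by simpa using hq.2
end

section
/- For every integer n with 1 ≤ n < s and every q in the interval [q_{n−1}, q_n], one has L_{ξ,2}(q) = min{ L_{x_{n,t}}(q) : 0 ≤ t ≤ a_n }, where q_m = (1/2)(log Q_m − log Δ_{m−1}) for 1 ≤ m < s and q_0 = 0. -/
open Pointwise

/-!
Write `x_m = (Q_m, P_m)`. Since `Q_{n-1} P_{n-2} - P_{n-1} Q_{n-2} = ±1`, every lattice point is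
`i x_{n-1} + j x_{n-2}` with `i, j ∈ ℤ`; and since `(-1)^m (Q_m P_k - P_m Q_k) ≥ 0` for `k ≥ m`,
passing to the limit `P_k / Q_k → ξ` (or to the last convergent) shows that `Q_m ξ - P_m` has
sign `(-1)^m`. So the point `(Q, P) = i x_{n-1} + j x_{n-2}` has `|Q| = |i Q_{n-1} + j Q_{n-2}|`
and `|Q ξ - P| = |j Δ_{n-2} - i Δ_{n-1}|`. For `q ∈ [q_{n-1}, q_n]`, i.e.
`Q_{n-1} e^{-q} ≤ Δ_{n-2} e^q` and `Δ_{n-1} e^q ≤ Q_n e^{-q}`, a point with `j ≠ 0` is at least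
as large, for the gauge of `C_ξ(e^q)`, as one of the `x_{n,t}` (take `t = 0`, `t = i` or
`t = a_n` according as `i < 0`, `0 ≤ i ≤ a_n` or `i > a_n`), while `x_{n-1}` is no larger than
any `x_{n,t}`. Hence `λ_2` is attained by `x_{n-1}` together with the smallest `x_{n,t}`.
-/

open Real

/-! ### Lattice points and the gauge of `C_ξ(e^q)` -/

def cross (x y : ℤ × ℤ) : ℤ := x.1 * y.2 - x.2 * y.1

lemma cross_eq_zero_of_cross_eq_zero {a x y : ℤ × ℤ} (ha : a ≠ 0) (hx : cross a x = 0)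
    (hy : cross a y = 0) : cross x y = 0 := by
  unfold cross at *
  have h1 : a.1 * (x.1 * y.2 - x.2 * y.1) = 0 := by linear_combination x.1 * hy - y.1 * hx
  have h2 : a.2 * (x.1 * y.2 - x.2 * y.1) = 0 := by linear_combination x.2 * hy - y.2 * hx
  rcases mul_eq_zero.1 h1 with h1 | h1
  · rcases mul_eq_zero.1 h2 with h2 | h2
    · exact absurd (Prod.ext h1 h2) ha
    · exact h2
  · exact h1

lemma cross_self_eq_zero (x : ℤ × ℤ) : cross x x = 0 := by
  rw [cross, mul_comm, sub_self]

lemma cross_swap (x y : ℤ × ℤ) : cross y x = -cross x y := by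
  simp only [cross]
  ring

lemma left_ne_zero_of_cross_ne_zero {x y : ℤ × ℤ} (h : cross x y ≠ 0) : x ≠ 0 := by
  rintro rfl
  simp [cross] at h

lemma right_ne_zero_of_cross_ne_zero {x y : ℤ × ℤ} (h : cross x y ≠ 0) : y ≠ 0 := by
  rintro rfl
  simp [cross] at h

lemma cross_smul_add_left_self (t : ℤ) (x y : ℤ × ℤ) : cross (t • x + y) x = -cross x y := by
  simp only [cross, Prod.fst_add, Prod.snd_add, Prod.smul_fst, Prod.smul_snd, smul_eq_mul]
  ring

lemma eq_smul_add_smul_of_cross_mul_self {u v : ℤ × ℤ} (huv : cross u v * cross u v = 1)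
    (x : ℤ × ℤ) : x = (cross x v * cross u v) • u + (cross u x * cross u v) • v := by
  unfold cross at *
  ext <;> simp only [Prod.fst_add, Prod.snd_add, Prod.smul_fst, Prod.smul_snd, smul_eq_mul]
  · linear_combination -x.1 * huv
  · linear_combination -x.2 * huv

lemma linearIndependent_iff_cross_ne_zero (v : Fin 2 → ℤ × ℤ) :
    LinearIndependent ℝ (fun i => (((v i).1 : ℝ), ((v i).2 : ℝ))) ↔ cross (v 0) (v 1) ≠ 0 := by
  let A : Matrix (Fin 2) (Fin 2) ℝ := Matrix.of fun i => ![((v i).1 : ℝ), ((v i).2 : ℝ)]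
  have hA : (fun i => (((v i).1 : ℝ), ((v i).2 : ℝ))) =
      (LinearEquiv.finTwoArrow ℝ ℝ).toLinearMap ∘ A.row := rfl
  rw [hA, LinearMap.linearIndependent_iff _ (by simp), Matrix.linearIndependent_rows_iff_isUnit,
    Matrix.isUnit_iff_isUnit_det, isUnit_iff_ne_zero, Matrix.det_fin_two, cross]
  simp [A]
  norm_cast

def resid (ξ : ℝ) (x : ℤ × ℤ) : ℝ := x.1 * ξ - x.2

lemma resid_smul_add_smul (ξ : ℝ) (i j : ℤ) (u v : ℤ × ℤ) :
    resid ξ (i • u + j • v) = i * resid ξ u + j * resid ξ v := by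
  simp only [resid, Prod.fst_add, Prod.snd_add, Prod.smul_fst, Prod.smul_snd, smul_eq_mul]
  push_cast
  ring

lemma cast_cross_eq (ξ : ℝ) (x y : ℤ × ℤ) :
    (cross x y : ℝ) = y.1 * resid ξ x - x.1 * resid ξ y := by
  simp only [cross, resid]
  push_cast
  ring

noncomputable def bodyGauge (ξ q : ℝ) (x : ℤ × ℤ) : ℝ :=
  max (|(x.1 : ℝ)| * exp (-q)) (|resid ξ x| * exp q)

section Gauge

variable {ξ q : ℝ}

lemma Lx_eq_log_bodyGauge (x : ℤ × ℤ) : Lx ξ x q = log (bodyGauge ξ q x) := rfl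

lemma bodyGauge_neg (x : ℤ × ℤ) : bodyGauge ξ q (-x) = bodyGauge ξ q x := by
  have h : resid ξ (-x) = -resid ξ x := by
    simp only [resid, Prod.fst_neg, Prod.snd_neg]
    push_cast
    ring
  simp only [bodyGauge, h, Prod.fst_neg, Int.cast_neg, abs_neg]

lemma bodyGauge_pos {x : ℤ × ℤ} (hx : x ≠ 0) : 0 < bodyGauge ξ q x := by
  by_cases h1 : x.1 = 0
  · have h2 : x.2 ≠ 0 := fun h2 => hx (Prod.ext h1 h2)
    refine lt_max_of_lt_right (mul_pos (abs_pos.2 ?_) (exp_pos q))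
    simpa [resid, h1] using h2
  · exact lt_max_of_lt_left (mul_pos (abs_pos.2 (by exact_mod_cast h1)) (exp_pos _))

lemma bodyGauge_le_of_mem_smul_body {l : ℝ} (hl : 0 ≤ l) {x : ℤ × ℤ}
    (h : ((x.1 : ℝ), (x.2 : ℝ)) ∈ l • body ξ q) : bodyGauge ξ q x ≤ l := by
  obtain ⟨p, ⟨hp1, hp2⟩, hpx⟩ := Set.mem_smul_set.1 h
  obtain ⟨hpx1, hpx2⟩ : l * p.1 = x.1 ∧ l * p.2 = x.2 := Prod.ext_iff.1 hpx
  have hx : |(x.1 : ℝ)| = l * |p.1| := by rw [← hpx1, abs_mul, abs_of_nonneg hl]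
  have hr : |resid ξ x| = l * |p.1 * ξ - p.2| := by
    rw [resid, ← hpx1, ← hpx2, mul_assoc, ← mul_sub, abs_mul, abs_of_nonneg hl]
  refine max_le ?_ ?_
  · calc |(x.1 : ℝ)| * exp (-q) ≤ l * exp q * exp (-q) := by rw [hx]; gcongr
      _ = l := by rw [mul_assoc, ← exp_add, add_neg_cancel, exp_zero, mul_one]
  · calc |resid ξ x| * exp q ≤ l * exp (-q) * exp q := by rw [hr]; gcongr
      _ = l := by rw [mul_assoc, ← exp_add, neg_add_cancel, exp_zero, mul_one]

lemma mem_smul_body_of_bodyGauge_le {l : ℝ} (hl : 0 < l) {x : ℤ × ℤ} (h : bodyGauge ξ q x ≤ l) :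
    ((x.1 : ℝ), (x.2 : ℝ)) ∈ l • body ξ q := by
  obtain ⟨h1, h2⟩ := max_le_iff.1 h
  refine Set.mem_smul_set.2 ⟨((x.1 : ℝ) / l, (x.2 : ℝ) / l), ⟨?_, ?_⟩, ?_⟩
  · dsimp only
    rw [abs_div, abs_of_pos hl, div_le_iff₀ hl]
    calc |(x.1 : ℝ)| = |(x.1 : ℝ)| * exp (-q) * exp q := by
          rw [mul_assoc, ← exp_add, neg_add_cancel, exp_zero, mul_one]
      _ ≤ l * exp q := by gcongr
      _ = exp q * l := mul_comm _ _
  · dsimp only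
    rw [div_mul_eq_mul_div, ← sub_div, abs_div, abs_of_pos hl, div_le_iff₀ hl]
    calc |(x.1 : ℝ) * ξ - x.2| = |resid ξ x| * exp q * exp (-q) := by
          rw [mul_assoc, ← exp_add, add_neg_cancel, exp_zero, mul_one, resid]
      _ ≤ l * exp (-q) := by gcongr
      _ = exp (-q) * l := mul_comm _ _
  · simp only [Prod.smul_mk, smul_eq_mul, mul_div_cancel₀ _ hl.ne']

lemma lam_two_eq {l : ℝ} {u v : ℤ × ℤ} (huv : cross u v ≠ 0) (hu : bodyGauge ξ q u ≤ l)
    (hv : bodyGauge ξ q v ≤ l) (hlow : ∀ x, cross v x ≠ 0 → l ≤ bodyGauge ξ q x) :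
    lam ξ q 2 = l := by
  have hl : 0 < l := (bodyGauge_pos (left_ne_zero_of_cross_ne_zero huv)).trans_le hu
  have hmem : l ∈ {l : ℝ | 0 ≤ l ∧ ∃ w : Fin 2 → ℤ × ℤ,
      LinearIndependent ℝ (fun i => (((w i).1 : ℝ), ((w i).2 : ℝ))) ∧
      ∀ i, (((w i).1 : ℝ), ((w i).2 : ℝ)) ∈ l • body ξ q} := by
    refine ⟨hl.le, ![u, v], (linearIndependent_iff_cross_ne_zero _).2 huv, fun i => ?_⟩
    fin_cases i
    exacts [mem_smul_body_of_bodyGauge_le hl hu, mem_smul_body_of_bodyGauge_le hl hv]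
  refine le_antisymm (csInf_le ⟨0, fun _ h => h.1⟩ hmem) (le_csInf ⟨l, hmem⟩ ?_)
  rintro l' ⟨hl', w, hw, hwl'⟩
  obtain ⟨i, hi⟩ : ∃ i, cross v (w i) ≠ 0 := by
    by_contra! h
    exact (linearIndependent_iff_cross_ne_zero w).1 hw
      (cross_eq_zero_of_cross_eq_zero (right_ne_zero_of_cross_ne_zero huv) (h 0) (h 1))
  exact (hlow _ hi).trans (bodyGauge_le_of_mem_smul_body hl' (hwl' i))

end Gauge

lemma mul_exp_neg_le_mul_exp_iff {A D : ℝ} (hA : 0 < A) (hD : 0 < D) (q : ℝ) :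
    A * exp (-q) ≤ D * exp q ↔ log A - log D ≤ 2 * q := by
  rw [← exp_log hA, ← exp_log hD, ← exp_add, ← exp_add, exp_le_exp, log_exp, log_exp]
  constructor <;> intro h <;> linarith

/-! ### Convergents -/

lemma neg_one_zpow_sub_one {α : Type*} [DivisionRing α] (m : ℤ) :
    (-1 : α) ^ (m - 1) = -(-1) ^ m := by
  rw [zpow_sub_one₀ (by norm_num), inv_neg_one, mul_neg_one]

lemma neg_one_zpow_mul_self {α : Type*} [Field α] (m : ℤ) : (-1 : α) ^ m * (-1) ^ m = 1 := by
  rw [← mul_zpow, neg_one_mul, neg_neg, one_zpow]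

lemma eq_coe_add_one_of_lt_of_not_lt {s : WithTop ℤ} {k : ℤ} (h : (k : WithTop ℤ) < s)
    (h' : ¬ ((k + 1 : ℤ) : WithTop ℤ) < s) : s = ((k + 1 : ℤ) : WithTop ℤ) := by
  induction s using WithTop.recTopCoe with
  | top => exact absurd (WithTop.coe_lt_top _) h'
  | coe N =>
    norm_cast at h h' ⊢
    omega

namespace CFData

variable (c : CFData)

def convergent (m : ℤ) : ℤ × ℤ := (c.Q m, c.P m)

lemma lt_s_of_le {m k : ℤ} (h : m ≤ k) (hk : (k : WithTop ℤ) < c.s) : (m : WithTop ℤ) < c.s :=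
  (WithTop.coe_le_coe.2 h).trans_lt hk

lemma semiconvergent_eq (n t : ℤ) :
    (c.Qt n t, c.Pt n t) = t • c.convergent (n - 1) + c.convergent (n - 2) := by
  ext <;> simp only [Qt, Pt, convergent, Prod.fst_add, Prod.snd_add, Prod.smul_fst, Prod.smul_snd,
    smul_eq_mul] <;> ring

lemma convergent_eq_semiconvergent {n : ℤ} (hn : 1 ≤ n) (hns : (n : WithTop ℤ) < c.s) :
    c.convergent n = (c.Qt n (c.a n), c.Pt n (c.a n)) := by
  rw [convergent, Qt, Pt, c.hQrec n hn hns, c.hPrec n hn hns]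

lemma convergent_add_one {m : ℤ} (hm : 0 ≤ m) (hs : ((m + 1 : ℤ) : WithTop ℤ) < c.s) :
    c.convergent (m + 1) = c.a (m + 1) • c.convergent m + c.convergent (m - 1) := by
  rw [c.convergent_eq_semiconvergent (by omega) hs, semiconvergent_eq, add_sub_cancel_right,
    show m + 1 - 2 = m - 1 by ring]

lemma one_le_Q_and_Q_sub_one_le {m : ℤ} (hm : 0 ≤ m) (hs : (m : WithTop ℤ) < c.s) :
    1 ≤ c.Q m ∧ 0 ≤ c.Q (m - 1) ∧ c.Q (m - 1) ≤ c.Q m := by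
  induction m, hm using Int.leInduction with
  | base => simp [c.hQ0, c.hQneg]
  | succ m hm ih =>
    obtain ⟨h1, h0, -⟩ := ih (c.lt_s_of_le (by omega) hs)
    have hrec : c.Q (m + 1) = c.a (m + 1) * c.Q m + c.Q (m - 1) :=
      congrArg Prod.fst (c.convergent_add_one hm hs)
    have ha := c.ha (m + 1) (by omega) hs
    rw [add_sub_cancel_right]
    refine ⟨by nlinarith, by omega, by nlinarith⟩

lemma one_le_Q {m : ℤ} (hm : 0 ≤ m) (hs : (m : WithTop ℤ) < c.s) : 1 ≤ c.Q m :=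
  (c.one_le_Q_and_Q_sub_one_le hm hs).1

lemma Q_nonneg {m : ℤ} (hm : -1 ≤ m) (hs : (m : WithTop ℤ) < c.s) : 0 ≤ c.Q m := by
  rcases hm.eq_or_lt with rfl | hm
  · simp [c.hQneg]
  · linarith [c.one_le_Q (by omega) hs]

lemma Q_sub_one_le {m : ℤ} (hm : 0 ≤ m) (hs : (m : WithTop ℤ) < c.s) : c.Q (m - 1) ≤ c.Q m :=
  (c.one_le_Q_and_Q_sub_one_le hm hs).2.2

lemma cast_cross_convergent_convergent_sub_one {m : ℤ} (hm : 0 ≤ m) (hs : (m : WithTop ℤ) < c.s) :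
    (cross (c.convergent m) (c.convergent (m - 1)) : ℝ) = (-1) ^ m := by
  induction m, hm using Int.leInduction with
  | base => simp [cross, convergent, c.hQ0, c.hQneg, c.hP0, c.hPneg]
  | succ m hm ih =>
    rw [c.convergent_add_one hm hs, add_sub_cancel_right, zpow_add_one₀ (by norm_num),
      ← ih (c.lt_s_of_le (by omega) hs)]
    simp only [cross, Prod.fst_add, Prod.snd_add, Prod.smul_fst, Prod.smul_snd, smul_eq_mul]
    push_cast
    ring

lemma neg_one_zpow_mul_cross_nonneg {m k : ℤ} (hm : -1 ≤ m) (hmk : m ≤ k)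
    (hk : (k : WithTop ℤ) < c.s) : 0 ≤ (-1 : ℝ) ^ m * cross (c.convergent m) (c.convergent k) := by
  have key : ∀ k, m ≤ k → ((k + 1 : ℤ) : WithTop ℤ) < c.s →
      0 ≤ (-1 : ℝ) ^ m * cross (c.convergent m) (c.convergent k) ∧
        0 ≤ (-1 : ℝ) ^ m * cross (c.convergent m) (c.convergent (k + 1)) := by
    intro k hmk
    induction k, hmk using Int.leInduction with
    | base =>
      intro hs
      have h := c.cast_cross_convergent_convergent_sub_one (m := m + 1) (by omega) hs
      rw [add_sub_cancel_right, cross_swap, zpow_add_one₀ (by norm_num)] at h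
      have hswap : (cross (c.convergent m) (c.convergent (m + 1)) : ℝ) = (-1) ^ m := by
        push_cast at h
        linarith
      rw [hswap, neg_one_zpow_mul_self, cross_self_eq_zero]
      simp
    | succ k hmk ih =>
      intro hs
      obtain ⟨h0, h1⟩ := ih (c.lt_s_of_le (by omega) hs)
      refine ⟨h1, ?_⟩
      have ha : (1 : ℝ) ≤ c.a (k + 1 + 1) := by exact_mod_cast c.ha _ (by omega) hs
      have hrec : (-1 : ℝ) ^ m * cross (c.convergent m) (c.convergent (k + 1 + 1)) =
          c.a (k + 1 + 1) * ((-1 : ℝ) ^ m * cross (c.convergent m) (c.convergent (k + 1))) +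
            (-1 : ℝ) ^ m * cross (c.convergent m) (c.convergent k) := by
        rw [c.convergent_add_one (by omega) hs, add_sub_cancel_right]
        simp only [cross, Prod.fst_add, Prod.snd_add, Prod.smul_fst, Prod.smul_snd, smul_eq_mul]
        push_cast
        ring
      rw [hrec]
      exact add_nonneg (mul_nonneg (by linarith) h1) h0
  rcases hmk.eq_or_lt with rfl | hlt
  · rw [cross_self_eq_zero, Int.cast_zero, mul_zero]
  · simpa using (key (k - 1) (by omega) (by simpa using hk)).2

lemma one_le_of_coe_eq_s {N : ℤ} (hN : (N : WithTop ℤ) = c.s) : 1 ≤ N := by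
  have := c.hs
  rw [← hN] at this
  exact_mod_cast this

lemma resid_div_eq (m : ℤ) {k : ℤ} (hk : (c.Q k : ℝ) ≠ 0) :
    resid ((c.P k : ℝ) / c.Q k) (c.convergent m) =
      cross (c.convergent m) (c.convergent k) / c.Q k := by
  simp only [resid, cross, convergent]
  push_cast
  field_simp

lemma neg_one_zpow_mul_resid_nonneg {m : ℤ} (hm : -1 ≤ m) (hs : (m : WithTop ℤ) < c.s) :
    0 ≤ (-1 : ℝ) ^ m * resid c.ξ (c.convergent m) := by
  have happrox : ∀ k : ℤ, 0 ≤ k → m ≤ k → (k : WithTop ℤ) < c.s →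
      0 ≤ (-1 : ℝ) ^ m * resid ((c.P k : ℝ) / c.Q k) (c.convergent m) := by
    intro k hk0 hmk hk
    have hQ : (0 : ℝ) < c.Q k := by exact_mod_cast c.one_le_Q hk0 hk
    rw [c.resid_div_eq m hQ.ne', mul_div_assoc']
    exact div_nonneg (c.neg_one_zpow_mul_cross_nonneg hm hmk hk) hQ.le
  rcases eq_or_ne c.s ⊤ with hS | hS
  · have hlim : Filter.Tendsto
        (fun k : ℕ => (-1 : ℝ) ^ m * resid ((c.P k : ℝ) / c.Q k) (c.convergent m)) Filter.atTop
        (nhds ((-1 : ℝ) ^ m * resid c.ξ (c.convergent m))) := by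
      simp only [resid]
      exact (((c.hinf hS).const_mul _).sub_const _).const_mul _
    refine ge_of_tendsto hlim (Filter.eventually_atTop.2 ⟨m.toNat, fun k hk => ?_⟩)
    exact happrox k k.cast_nonneg (Int.toNat_le.1 hk) (hS ▸ WithTop.coe_lt_top _)
  · obtain ⟨N, hN⟩ := WithTop.ne_top_iff_exists.1 hS
    have hmN : m < N := by rw [← hN] at hs; exact_mod_cast hs
    have hN1 := c.one_le_of_coe_eq_s hN
    rw [c.hfin N hN]
    exact happrox (N - 1) (by omega) (by omega) (hN ▸ WithTop.coe_lt_coe.2 (by omega))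

lemma resid_convergent {m : ℤ} (hm : -1 ≤ m) (hs : (m : WithTop ℤ) < c.s) :
    resid c.ξ (c.convergent m) = (-1) ^ m * c.Δ m := by
  have h := c.neg_one_zpow_mul_resid_nonneg hm hs
  have hΔ : c.Δ m = (-1) ^ m * resid c.ξ (c.convergent m) := by
    rw [← abs_of_nonneg h, abs_mul, abs_neg_one_zpow, one_mul]
    rfl
  rw [hΔ, ← mul_assoc, neg_one_zpow_mul_self, one_mul]

lemma resid_smul_convergent_add_smul_convergent {n : ℤ} (hn : 1 ≤ n)
    (hns : ((n - 1 : ℤ) : WithTop ℤ) < c.s) (i j : ℤ) :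
    resid c.ξ (i • c.convergent (n - 1) + j • c.convergent (n - 2)) =
      (-1) ^ n * (j * c.Δ (n - 2) - i * c.Δ (n - 1)) := by
  rw [resid_smul_add_smul, c.resid_convergent (by omega) hns,
    c.resid_convergent (by omega) (c.lt_s_of_le (by omega) hns), show n - 2 = n - 1 - 1 by ring]
  simp only [neg_one_zpow_sub_one]
  ring

lemma Q_mul_Δ_sub_one_add_Q_sub_one_mul_Δ {m : ℤ} (hm : 0 ≤ m) (hs : (m : WithTop ℤ) < c.s) :
    c.Q m * c.Δ (m - 1) + c.Q (m - 1) * c.Δ m = 1 := by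
  have h := c.cast_cross_convergent_convergent_sub_one hm hs
  rw [cast_cross_eq c.ξ, c.resid_convergent (by omega) hs,
    c.resid_convergent (by omega) (c.lt_s_of_le (by omega) hs), neg_one_zpow_sub_one] at h
  simp only [convergent] at h
  linear_combination (-1 : ℝ) ^ m * h -
    (c.Q m * c.Δ (m - 1) + c.Q (m - 1) * c.Δ m - 1) * neg_one_zpow_mul_self (α := ℝ) m

lemma Δ_eq_Δ_sub_two_sub_mul {n : ℤ} (hn : 1 ≤ n) (hns : (n : WithTop ℤ) < c.s) :
    c.Δ n = c.Δ (n - 2) - c.a n * c.Δ (n - 1) := by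
  have h := c.resid_smul_convergent_add_smul_convergent hn (c.lt_s_of_le (by omega) hns) (c.a n) 1
  rw [one_smul, ← semiconvergent_eq, ← c.convergent_eq_semiconvergent hn hns,
    c.resid_convergent (by omega) hns] at h
  simpa using mul_left_cancel₀ (zpow_ne_zero n (by norm_num)) h

lemma Δ_eq_zero_of_coe_eq_s {N : ℤ} (hN : (N : WithTop ℤ) = c.s) : c.Δ (N - 1) = 0 := by
  have hN1 := c.one_le_of_coe_eq_s hN
  have hQ : (c.Q (N - 1) : ℝ) ≠ 0 := by
    have := c.one_le_Q (m := N - 1) (by omega) (hN ▸ WithTop.coe_lt_coe.2 (by omega))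
    exact_mod_cast (by omega : c.Q (N - 1) ≠ 0)
  rw [Δ, c.hfin N hN, mul_div_cancel₀ _ hQ, sub_self, abs_zero]

lemma Δ_le_Δ_sub_one {m : ℤ} (hm : 0 ≤ m) (hs : (m : WithTop ℤ) < c.s) :
    c.Δ m ≤ c.Δ (m - 1) := by
  by_cases hs1 : ((m + 1 : ℤ) : WithTop ℤ) < c.s
  · have h := c.Δ_eq_Δ_sub_two_sub_mul (n := m + 1) (by omega) hs1
    rw [add_sub_cancel_right, show m + 1 - 2 = m - 1 by ring] at h
    have ha : (1 : ℝ) ≤ c.a (m + 1) := by exact_mod_cast c.ha _ (by omega) hs1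
    have h0 : 0 ≤ c.Δ (m + 1) := abs_nonneg _
    have h1 : 0 ≤ c.Δ m := abs_nonneg _
    nlinarith
  · have h := c.Δ_eq_zero_of_coe_eq_s (eq_coe_add_one_of_lt_of_not_lt hs hs1).symm
    rw [add_sub_cancel_right] at h
    exact h ▸ abs_nonneg _

lemma Δ_pos_s15 {m : ℤ} (hm : -1 ≤ m) (hs : ((m + 1 : ℤ) : WithTop ℤ) < c.s) : 0 < c.Δ m := by
  have h := c.Q_mul_Δ_sub_one_add_Q_sub_one_mul_Δ (m := m + 1) (by omega) hs
  have hle := c.Δ_le_Δ_sub_one (m := m + 1) (by omega) hs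
  rw [add_sub_cancel_right] at h hle
  by_contra! h0
  have hm0 : c.Δ m = 0 := le_antisymm h0 (abs_nonneg _)
  have hm1 : c.Δ (m + 1) = 0 := le_antisymm (hm0 ▸ hle) (abs_nonneg _)
  rw [hm0, hm1] at h
  simp at h

/-! ### The window `q_{n-1} ≤ q ≤ q_n` -/

variable {n : ℤ} {q : ℝ}

lemma cast_Q_eq (hn : 1 ≤ n) (hns : (n : WithTop ℤ) < c.s) :
    (c.Q n : ℝ) = c.a n * c.Q (n - 1) + c.Q (n - 2) := by
  rw [c.hQrec n hn hns]
  push_cast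
  ring

lemma cross_convergent_sub_one_convergent_sub_two_mul_self (hn : 1 ≤ n)
    (hns : ((n - 1 : ℤ) : WithTop ℤ) < c.s) :
    cross (c.convergent (n - 1)) (c.convergent (n - 2)) *
      cross (c.convergent (n - 1)) (c.convergent (n - 2)) = 1 := by
  have h := c.cast_cross_convergent_convergent_sub_one (m := n - 1) (by omega) hns
  rw [show n - 1 - 1 = n - 2 by ring] at h
  exact_mod_cast h ▸ neg_one_zpow_mul_self (α := ℝ) (n - 1)

lemma Q_sub_one_mul_exp_neg_le (hn : 1 ≤ n) (hns : (n : WithTop ℤ) < c.s)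
    (hq : c.qcrit (n - 1) ≤ q) : c.Q (n - 1) * exp (-q) ≤ c.Δ (n - 2) * exp q := by
  have hA : (0 : ℝ) < c.Q (n - 1) := by
    exact_mod_cast c.one_le_Q (by omega) (c.lt_s_of_le (by omega) hns)
  rw [mul_exp_neg_le_mul_exp_iff hA (c.Δ_pos_s15 (by omega) (c.lt_s_of_le (by omega) hns))]
  rw [qcrit, show n - 1 - 1 = n - 2 by ring] at hq
  linarith

lemma Δ_sub_one_mul_exp_le (hn : 1 ≤ n) (hns : (n : WithTop ℤ) < c.s)
    (hq : q ≤ c.qcrit n) : c.Δ (n - 1) * exp q ≤ c.Q n * exp (-q) := by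
  have hQ : (0 : ℝ) < c.Q n := by exact_mod_cast c.one_le_Q (by omega) hns
  have hδ := c.Δ_pos_s15 (m := n - 1) (by omega) (by simpa using hns)
  have h := mul_exp_neg_le_mul_exp_iff hδ hQ (-q)
  rw [neg_neg] at h
  rw [h]
  rw [qcrit] at hq
  linarith

lemma bodyGauge_convergent (m : ℤ) (hQ : 0 ≤ c.Q m) :
    bodyGauge c.ξ q (c.convergent m) = max (c.Q m * exp (-q)) (c.Δ m * exp q) := by
  rw [bodyGauge, convergent, abs_of_nonneg (by exact_mod_cast hQ)]
  rfl

lemma bodyGauge_smul_convergent_add_smul_convergent (hn : 1 ≤ n)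
    (hns : ((n - 1 : ℤ) : WithTop ℤ) < c.s) (i j : ℤ) :
    bodyGauge c.ξ q (i • c.convergent (n - 1) + j • c.convergent (n - 2)) =
      max (|(i : ℝ) * c.Q (n - 1) + j * c.Q (n - 2)| * exp (-q))
        (|j * c.Δ (n - 2) - i * c.Δ (n - 1)| * exp q) := by
  rw [bodyGauge, c.resid_smul_convergent_add_smul_convergent hn hns, abs_mul, abs_neg_one_zpow,
    one_mul]
  simp only [convergent, Prod.smul_mk, Int.zsmul_eq_mul, Prod.mk_add_mk, Int.cast_add, Int.cast_mul]

lemma bodyGauge_semiconvergent (hn : 1 ≤ n) (hns : (n : WithTop ℤ) < c.s) {t : ℤ} (ht0 : 0 ≤ t)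
    (ht : t ≤ c.a n) : bodyGauge c.ξ q (c.Qt n t, c.Pt n t) =
      max ((t * c.Q (n - 1) + c.Q (n - 2)) * exp (-q))
        ((c.Δ (n - 2) - t * c.Δ (n - 1)) * exp q) := by
  have hn1 : ((n - 1 : ℤ) : WithTop ℤ) < c.s := c.lt_s_of_le (by omega) hns
  have hQ1 := c.Q_nonneg (m := n - 1) (by omega) hn1
  have hQ2 := c.Q_nonneg (m := n - 2) (by omega) (c.lt_s_of_le (by omega) hns)
  have hΔ : 0 ≤ c.Δ (n - 2) - c.a n * c.Δ (n - 1) := c.Δ_eq_Δ_sub_two_sub_mul hn hns ▸ abs_nonneg _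
  have hδ := (c.Δ_pos_s15 (m := n - 1) (by omega) (by simpa using hns)).le
  have ht' : (t : ℝ) ≤ c.a n := by exact_mod_cast ht
  rw [semiconvergent_eq, ← one_smul ℤ (c.convergent (n - 2)),
    c.bodyGauge_smul_convergent_add_smul_convergent hn hn1,
    abs_of_nonneg (by positivity), abs_of_nonneg (by push_cast; nlinarith)]
  simp only [Int.cast_one, one_mul]

lemma bodyGauge_convergent_sub_one_le_semiconvergent (hn : 1 ≤ n) (hns : (n : WithTop ℤ) < c.s)
    (hq₁ : c.qcrit (n - 1) ≤ q) (hq₂ : q ≤ c.qcrit n) {t : ℤ} (ht0 : 0 ≤ t) (ht : t ≤ c.a n) :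
    bodyGauge c.ξ q (c.convergent (n - 1)) ≤ bodyGauge c.ξ q (c.Qt n t, c.Pt n t) := by
  have hQ1 : (0 : ℝ) ≤ c.Q (n - 1) := by
    exact_mod_cast c.Q_nonneg (by omega) (c.lt_s_of_le (by omega) hns)
  have hQ2 : (0 : ℝ) ≤ c.Q (n - 2) := by
    exact_mod_cast c.Q_nonneg (by omega) (c.lt_s_of_le (by omega) hns)
  have hΔ : 0 ≤ c.Δ (n - 2) - c.a n * c.Δ (n - 1) := c.Δ_eq_Δ_sub_two_sub_mul hn hns ▸ abs_nonneg _
  have hδ : 0 ≤ c.Δ (n - 1) := abs_nonneg _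
  rw [c.bodyGauge_convergent _ (by exact_mod_cast hQ1), c.bodyGauge_semiconvergent hn hns ht0 ht]
  refine max_le ?_ ?_
  · rcases ht0.eq_or_lt with rfl | ht0
    · refine le_max_of_le_right ?_
      simpa using c.Q_sub_one_mul_exp_neg_le hn hns hq₁
    · refine le_max_of_le_left (by gcongr; nlinarith [show (1 : ℝ) ≤ t by exact_mod_cast ht0])
  · rcases ht.eq_or_lt with rfl | ht
    · refine le_max_of_le_left ?_
      exact c.cast_Q_eq hn hns ▸ c.Δ_sub_one_mul_exp_le hn hns hq₂
    · have ht' : (t : ℝ) + 1 ≤ c.a n := by exact_mod_cast ht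
      refine le_max_of_le_right (by gcongr; nlinarith [mul_le_mul_of_nonneg_right ht' hδ])

lemma Δ_mul_exp_le (hn : 1 ≤ n) (hns : (n : WithTop ℤ) < c.s) (hq : q ≤ c.qcrit n) :
    c.Δ n * exp q ≤ c.Q n * exp (-q) :=
  (mul_le_mul_of_nonneg_right (c.Δ_le_Δ_sub_one (by omega) hns) (exp_pos q).le).trans
    (c.Δ_sub_one_mul_exp_le hn hns hq)

lemma bodyGauge_convergent_le (hn : 1 ≤ n) (hns : (n : WithTop ℤ) < c.s) (hq : q ≤ c.qcrit n) :
    bodyGauge c.ξ q (c.convergent n) ≤ c.Q n * exp (-q) := by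
  rw [c.bodyGauge_convergent n (c.Q_nonneg (by omega) hns)]
  exact max_le le_rfl (c.Δ_mul_exp_le hn hns hq)

lemma bodyGauge_semiconvergent_zero_le (hn : 1 ≤ n) (hns : (n : WithTop ℤ) < c.s)
    (hq : c.qcrit (n - 1) ≤ q) : bodyGauge c.ξ q (c.Qt n 0, c.Pt n 0) ≤ c.Δ (n - 2) * exp q := by
  have hn1 : ((n - 1 : ℤ) : WithTop ℤ) < c.s := c.lt_s_of_le (by omega) hns
  have hQ21 : (c.Q (n - 2) : ℝ) ≤ c.Q (n - 1) := by
    exact_mod_cast (show n - 2 = n - 1 - 1 by ring) ▸ c.Q_sub_one_le (by omega) hn1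
  rw [c.bodyGauge_semiconvergent hn hns le_rfl (by linarith [c.ha n hn hns])]
  simp only [Int.cast_zero, zero_mul, zero_add, sub_zero]
  refine max_le ?_ le_rfl
  calc (c.Q (n - 2) : ℝ) * exp (-q) ≤ c.Q (n - 1) * exp (-q) := by gcongr
    _ ≤ c.Δ (n - 2) * exp q := c.Q_sub_one_mul_exp_neg_le hn hns hq

lemma exists_semiconvergent_bodyGauge_le (hn : 1 ≤ n) (hns : (n : WithTop ℤ) < c.s)
    (hq₁ : c.qcrit (n - 1) ≤ q) (hq₂ : q ≤ c.qcrit n) (i : ℤ) {j : ℤ} (hj : 0 < j) :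
    ∃ t, 0 ≤ t ∧ t ≤ c.a n ∧ bodyGauge c.ξ q (c.Qt n t, c.Pt n t) ≤
      bodyGauge c.ξ q (i • c.convergent (n - 1) + j • c.convergent (n - 2)) := by
  have hn1 : ((n - 1 : ℤ) : WithTop ℤ) < c.s := c.lt_s_of_le (by omega) hns
  have hQ1 : (0 : ℝ) ≤ c.Q (n - 1) := by exact_mod_cast c.Q_nonneg (by omega) hn1
  have hQ2 : (0 : ℝ) ≤ c.Q (n - 2) := by
    exact_mod_cast c.Q_nonneg (by omega) (c.lt_s_of_le (by omega) hns)
  have hδ : 0 ≤ c.Δ (n - 1) := abs_nonneg _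
  have hD : 0 ≤ c.Δ (n - 2) := abs_nonneg _
  have hj' : (1 : ℝ) ≤ j := by exact_mod_cast hj
  have ha := c.ha n hn hns
  rw [c.bodyGauge_smul_convergent_add_smul_convergent hn hn1]
  rcases lt_or_ge i 0 with hi | hi
  · refine ⟨0, le_rfl, by omega, (c.bodyGauge_semiconvergent_zero_le hn hns hq₁).trans ?_⟩
    have hi' : (i : ℝ) ≤ -1 := by exact_mod_cast (by omega : i ≤ -1)
    refine le_max_of_le_right (by gcongr; exact le_trans (by nlinarith) (le_abs_self _))
  rcases le_or_gt i (c.a n) with hia | hia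
  · refine ⟨i, hi, hia, ?_⟩
    have hi' : (0 : ℝ) ≤ i := by exact_mod_cast hi
    rw [c.bodyGauge_semiconvergent hn hns hi hia]
    refine max_le_max ?_ ?_
    · gcongr
      refine le_trans ?_ (le_abs_self _)
      nlinarith [mul_le_mul_of_nonneg_right hj' hQ2]
    · gcongr
      refine le_trans ?_ (le_abs_self _)
      nlinarith [mul_le_mul_of_nonneg_right hj' hD]
  · refine ⟨c.a n, by omega, le_rfl, ?_⟩
    have hia' : (c.a n : ℝ) ≤ i := by exact_mod_cast hia.le
    rw [← c.convergent_eq_semiconvergent hn hns]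
    refine (c.bodyGauge_convergent_le hn hns hq₂).trans (le_max_of_le_left ?_)
    gcongr
    refine le_trans ?_ (le_abs_self _)
    rw [c.cast_Q_eq hn hns]
    nlinarith [mul_le_mul_of_nonneg_right hia' hQ1, mul_le_mul_of_nonneg_right hj' hQ2]

lemma exists_semiconvergent_bodyGauge_le_of_cross_ne_zero (hn : 1 ≤ n)
    (hns : (n : WithTop ℤ) < c.s) (hq₁ : c.qcrit (n - 1) ≤ q) (hq₂ : q ≤ c.qcrit n)
    {x : ℤ × ℤ} (hx : cross (c.convergent (n - 1)) x ≠ 0) :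
    ∃ t, 0 ≤ t ∧ t ≤ c.a n ∧ bodyGauge c.ξ q (c.Qt n t, c.Pt n t) ≤ bodyGauge c.ξ q x := by
  have hunit := c.cross_convergent_sub_one_convergent_sub_two_mul_self hn
    (c.lt_s_of_le (by omega) hns)
  set i := cross x (c.convergent (n - 2)) * cross (c.convergent (n - 1)) (c.convergent (n - 2))
  set j := cross (c.convergent (n - 1)) x * cross (c.convergent (n - 1)) (c.convergent (n - 2))
  have hj : j ≠ 0 := mul_ne_zero hx (right_ne_zero_of_mul_eq_one hunit)
  rw [eq_smul_add_smul_of_cross_mul_self hunit x]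
  rcases hj.lt_or_gt with hj | hj
  · rw [← bodyGauge_neg, neg_add, ← neg_smul, ← neg_smul]
    exact c.exists_semiconvergent_bodyGauge_le hn hns hq₁ hq₂ (-i) (neg_pos.2 hj)
  · exact c.exists_semiconvergent_bodyGauge_le hn hns hq₁ hq₂ i hj

end CFData

theorem stmt15 (c : CFData) (n : ℤ) (hn : 1 ≤ n) (hns : (n : WithTop ℤ) < c.s)
    (q : ℝ) (hq : q ∈ Set.Icc (c.qcrit (n - 1)) (c.qcrit n)) :
    IsLeast {v : ℝ | ∃ t : ℤ, 0 ≤ t ∧ t ≤ c.a n ∧ v = Lx c.ξ (c.Qt n t, c.Pt n t) q}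
      (LL c.ξ 2 q) := by
  obtain ⟨hq₁, hq₂⟩ := hq
  obtain ⟨t₀, ht₀, hmin⟩ := (Finset.Icc 0 (c.a n)).exists_min_image
    (fun t => bodyGauge c.ξ q (c.Qt n t, c.Pt n t))
    ⟨0, Finset.mem_Icc.2 ⟨le_rfl, by linarith [c.ha n hn hns]⟩⟩
  rw [Finset.mem_Icc] at ht₀
  have hcross : cross (c.Qt n t₀, c.Pt n t₀) (c.convergent (n - 1)) ≠ 0 := by
    rw [c.semiconvergent_eq, cross_smul_add_left_self, neg_ne_zero]
    exact left_ne_zero_of_mul_eq_one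
      (c.cross_convergent_sub_one_convergent_sub_two_mul_self hn (c.lt_s_of_le (by omega) hns))
  have hlam : lam c.ξ q 2 = bodyGauge c.ξ q (c.Qt n t₀, c.Pt n t₀) := by
    refine lam_two_eq hcross le_rfl
      (c.bodyGauge_convergent_sub_one_le_semiconvergent hn hns hq₁ hq₂ ht₀.1 ht₀.2) fun x hx => ?_
    obtain ⟨t, ht0, ht, hle⟩ :=
      c.exists_semiconvergent_bodyGauge_le_of_cross_ne_zero hn hns hq₁ hq₂ hx
    exact (hmin t (Finset.mem_Icc.2 ⟨ht0, ht⟩)).trans hle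
  refine ⟨⟨t₀, ht₀.1, ht₀.2, by rw [LL, hlam, Lx_eq_log_bodyGauge]⟩, ?_⟩
  rintro _ ⟨t, ht0, ht, rfl⟩
  rw [LL, hlam, Lx_eq_log_bodyGauge]
  exact log_le_log (bodyGauge_pos (left_ne_zero_of_cross_ne_zero hcross))
    (hmin t (Finset.mem_Icc.2 ⟨ht0, ht⟩))
end
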